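/- Let G be a simple 3-connected graph on n ≥ 5 vertices with maximum degree at most 4 (so every vertex has degree 3 or 4). Then there exists a simple graph G' on the same vertex set with every edge of G an edge of G', such that G' is 3-connected, has maximum degree at most 4, and has at most two vertices of degree 3 (all other vertices having degree exactly 4). -/

import Mathlib

/-!
Take a supergraph `H` of `G` that is maximal among those of maximum degree at most 4. It is
3-connected, so its degrees are 3 or 4, and by maximality its degree-3 vertices are pairwise
adjacent. By the handshake lemma there is an even number of them, and four of them would form a
`K₄` component, which a 3-connected graph on at least 5 vertices cannot have.
-/

/-- A graph on more than 3 vertices is 3-connected if deleting any two vertices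
leaves a connected graph. -/
def ThreeConnected {V : Type} [Fintype V] (G : SimpleGraph V) : Prop :=
  3 < Fintype.card V ∧ ∀ u v : V, (G.induce ({u, v}ᶜ : Set V)).Connected

namespace SimpleGraph

variable {V : Type*}

lemma ncard_neighborSet_edge_le_one (s t v : V) : ((edge s t).neighborSet v).ncard ≤ 1 := by
  classical
  have hsub : (edge s t).neighborSet v ⊆ {if v = s then t else s} := by
    intro w hw
    rw [mem_neighborSet, edge_adj] at hw
    grind
  simpa using Set.ncard_le_ncard hsub

lemma ncard_neighborSet_sup_edge_le (H : SimpleGraph V) (s t v : V) :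
    ((H ⊔ edge s t).neighborSet v).ncard ≤ (H.neighborSet v).ncard + 1 := by
  rw [neighborSet_sup]
  exact (Set.ncard_union_le _ _).trans (Nat.add_le_add_left (ncard_neighborSet_edge_le_one ..) _)

lemma neighborSet_sup_edge_of_ne {H : SimpleGraph V} {s t v : V} (hs : v ≠ s) (ht : v ≠ t) :
    (H ⊔ edge s t).neighborSet v = H.neighborSet v := by
  ext w
  simp [edge_adj, hs, ht]

lemma adj_of_maximal_ncard_neighborSet_le {G H : SimpleGraph V} {k : ℕ}
    (hH : Maximal (fun H : SimpleGraph V ↦ G ≤ H ∧ ∀ v, (H.neighborSet v).ncard ≤ k) H)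
    {x y : V} (hxy : x ≠ y) (hx : (H.neighborSet x).ncard < k)
    (hy : (H.neighborSet y).ncard < k) : H.Adj x y := by
  by_contra hnadj
  refine hH.not_gt ⟨hH.prop.1.trans le_sup_left, fun v ↦ ?_⟩ (lt_sup_edge H x y hxy hnadj)
  by_cases hv : v = x ∨ v = y
  · have := ncard_neighborSet_sup_edge_le H x y v
    rcases hv with rfl | rfl <;> omega
  · push Not at hv
    rw [neighborSet_sup_edge_of_ne hv.1 hv.2]
    exact hH.prop.2 v

lemma ncard_neighborSet_eq_degree (G : SimpleGraph V) (v : V) [Fintype (G.neighborSet v)] :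
    (G.neighborSet v).ncard = G.degree v := by
  rw [← card_neighborSet_eq_degree, Set.ncard_eq_toFinset_card', Set.toFinset_card]

lemma even_ncard_setOf_odd_ncard_neighborSet [Fintype V] (G : SimpleGraph V) :
    Even {v | Odd (G.neighborSet v).ncard}.ncard := by
  classical
  rw [Set.ncard_eq_toFinset_card']
  simpa only [Set.toFinset_ofPred, ncard_neighborSet_eq_degree] using
    G.even_card_odd_degree_vertices

lemma IsClique.diff_singleton_subset_neighborSet {G : SimpleGraph V} {D : Set V}
    (hD : G.IsClique D) {x : V} (hx : x ∈ D) : D \ {x} ⊆ G.neighborSet x :=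
  fun _ hy ↦ hD hx hy.1 (Ne.symm hy.2)

lemma IsClique.ncard_le_ncard_neighborSet_add_one [Finite V] {G : SimpleGraph V} {D : Set V}
    (hD : G.IsClique D) {x : V} (hx : x ∈ D) : D.ncard ≤ (G.neighborSet x).ncard + 1 :=
  (Set.ncard_sdiff_singleton_add_one hx).symm.trans_le
    (Nat.add_le_add_right (Set.ncard_le_ncard (hD.diff_singleton_subset_neighborSet hx)) 1)

lemma IsClique.neighborSet_subset_of_ncard_lt [Finite V] {G : SimpleGraph V} {D : Set V}
    (hD : G.IsClique D) {x : V} (hx : x ∈ D) (hlt : (G.neighborSet x).ncard < D.ncard) :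
    G.neighborSet x ⊆ D := by
  have hle : (G.neighborSet x).ncard ≤ (D \ {x}).ncard := by
    have := Set.ncard_sdiff_singleton_add_one hx
    omega
  rw [← Set.eq_of_subset_of_ncard_le (hD.diff_singleton_subset_neighborSet hx) hle]
  exact Set.sdiff_subset

end SimpleGraph

open SimpleGraph

namespace ThreeConnected

variable {V : Type} [Fintype V] {G : SimpleGraph V}

lemma mono {H : SimpleGraph V} (h : ThreeConnected G) (hle : G ≤ H) :
    ThreeConnected H :=
  ⟨h.1, fun u v ↦ (h.2 u v).mono fun _ _ hab ↦ hle hab⟩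

/-- `{u, v}` cannot separate `T` from the rest of the graph. -/
lemma union_pair_eq_univ (h : ThreeConnected G) {T : Set V} {u v x : V}
    (hT : ∀ y ∈ T, G.neighborSet y ⊆ T ∪ {u, v}) (hx : x ∈ T) (hxu : x ≠ u)
    (hxv : x ≠ v) :
    T ∪ {u, v} = Set.univ := by
  refine Set.eq_univ_of_forall fun y ↦ ?_
  by_contra hy
  simp only [Set.mem_union, Set.mem_insert_iff, Set.mem_singleton_iff, not_or] at hy
  obtain ⟨hyT, hyu, hyv⟩ := hy
  obtain ⟨p⟩ := (h.2 u v).preconnected (⟨x, by simp [hxu, hxv]⟩ : ({u, v}ᶜ : Set V))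
    ⟨y, by simp [hyu, hyv]⟩
  obtain ⟨d, -, hdT, hdT'⟩ := p.exists_boundary_dart {z | (z : V) ∈ T} hx hyT
  have hsnd := hT _ hdT d.adj
  have hsep := d.snd.2
  simp only [Set.mem_union, Set.mem_insert_iff, Set.mem_singleton_iff, Set.mem_compl_iff]
    at hsnd hsep
  simp only [Set.mem_ofPred_eq] at hdT'
  tauto

lemma three_le_ncard_neighborSet (h : ThreeConnected G) (v : V) :
    3 ≤ (G.neighborSet v).ncard := by
  by_contra! hlt
  have hcompl : 2 ≤ ({v}ᶜ : Set V).ncard := by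
    rw [Set.ncard_compl, Set.ncard_singleton, Nat.card_eq_fintype_card]
    have := h.1
    omega
  obtain ⟨r, hNr, hrv, hr⟩ := Set.exists_subsuperset_card_eq
    (show G.neighborSet v ⊆ {v}ᶜ from fun _ hw ↦ (G.ne_of_adj hw).symm)
    (Nat.lt_succ_iff.mp hlt) hcompl
  obtain ⟨a, b, -, rfl⟩ := Set.ncard_eq_two.mp hr
  have hcover := h.union_pair_eq_univ (T := {v})
    (by rintro y rfl; exact hNr.trans Set.subset_union_right) rfl
    (fun hva ↦ hrv (by simp [hva]) rfl) (fun hvb ↦ hrv (by simp [hvb]) rfl)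
  have hcard := Set.ncard_union_le ({v} : Set V) {a, b}
  rw [hcover, Set.ncard_univ, Nat.card_eq_fintype_card, Set.ncard_singleton, hr] at hcard
  have := h.1
  omega

/-- Four pairwise adjacent vertices of degree 3 would form a `K₄` component. -/
lemma ncard_le_three_of_isClique (h : ThreeConnected G)
    (hn : 5 ≤ Fintype.card V) {D : Set V} (hD : G.IsClique D)
    (hdeg : ∀ x ∈ D, (G.neighborSet x).ncard = 3) : D.ncard ≤ 3 := by
  by_contra! hgt
  obtain ⟨x, hx⟩ := Set.nonempty_of_ncard_ne_zero (s := D) (by omega)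
  have hle := hD.ncard_le_ncard_neighborSet_add_one hx
  rw [hdeg x hx] at hle
  obtain ⟨z, hz, hzx⟩ := Set.exists_ne_of_one_lt_ncard (by omega : 1 < D.ncard) x
  have hclosed : ∀ y ∈ D, G.neighborSet y ⊆ D ∪ {x, x} := fun y hy ↦
    (hD.neighborSet_subset_of_ncard_lt hy (by rw [hdeg y hy]; omega)).trans
      Set.subset_union_left
  have hcover := h.union_pair_eq_univ hclosed hz hzx hzx
  rw [Set.pair_eq_singleton, Set.union_singleton, Set.insert_eq_of_mem hx] at hcover
  rw [hcover, Set.ncard_univ, Nat.card_eq_fintype_card] at hle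
  omega

end ThreeConnected

/-- Any simple 3-connected graph on `n ≥ 5` vertices with maximum degree at
most 4 can be augmented (by adding edges on the same vertex set) to a simple
3-connected graph of maximum degree at most 4 that has at most two vertices of
degree 3, all other vertices having degree exactly 4. -/
theorem augment_to_almost_four_regular {V : Type} [Fintype V]
    (G : SimpleGraph V) (hn : 5 ≤ Fintype.card V)
    (h3c : ThreeConnected G) (hdeg : ∀ v : V, (G.neighborSet v).ncard ≤ 4) :
    ∃ G' : SimpleGraph V, G ≤ G' ∧ ThreeConnected G' ∧
      (∀ v : V, (G'.neighborSet v).ncard ≤ 4) ∧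
      {v : V | (G'.neighborSet v).ncard = 3}.ncard ≤ 2 ∧
      (∀ v : V, (G'.neighborSet v).ncard ≠ 3 → (G'.neighborSet v).ncard = 4) := by
  obtain ⟨H, hGH, hH⟩ := Finite.exists_le_maximal
    (p := fun H : SimpleGraph V ↦ G ≤ H ∧ ∀ v, (H.neighborSet v).ncard ≤ 4)
    ⟨le_rfl, hdeg⟩
  have h3cH := h3c.mono hGH
  have hrange (v : V) : (H.neighborSet v).ncard = 3 ∨ (H.neighborSet v).ncard = 4 := by
    have := h3cH.three_le_ncard_neighborSet v
    have := hH.prop.2 v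
    omega
  set D := {v | (H.neighborSet v).ncard = 3}
  have hclique : H.IsClique D := fun x hx y hy hxy ↦
    adj_of_maximal_ncard_neighborSet_le hH hxy (by simp_all [D]) (by simp_all [D])
  have hodd : D = {v | Odd (H.neighborSet v).ncard} := by
    ext v
    rcases hrange v with h | h <;> simp [D, h] <;> decide
  have heven : Even D.ncard := hodd ▸ H.even_ncard_setOf_odd_ncard_neighborSet
  have hle := h3cH.ncard_le_three_of_isClique hn hclique fun _ hx ↦ hx
  refine ⟨H, hGH, h3cH, hH.prop.2, ?_, fun v hv ↦ (hrange v).resolve_left hv⟩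
  show D.ncard ≤ 2
  obtain ⟨k, hk⟩ := heven
  omega
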